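/- Let A be a complex normed algebra, X a Banach A-bimodule, f : A → X, g₁, g₂ : A → A, and φ : A × A → [0,∞) a function with lim_{n→∞} 2^{-2n} φ(2ⁿa, 2ⁿb) = 0 for all a,b ∈ A. Suppose the limits d(a) := lim_{n→∞} 2^{-n} f(2ⁿa), σ(a) := lim_{n→∞} 2^{-n} g₁(2ⁿa), and τ(a) := lim_{n→∞} 2^{-n} g₂(2ⁿa) exist for every a ∈ A, and that ‖f(ab) − f(a)g₁(b) − g₂(a)f(b)‖ ≤ φ(a,b) for all a,b ∈ A. Then d(ab) = d(a)σ(b) + τ(a)d(b) for all a,b ∈ A. -/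

import Mathlib

open Filter Topology

/-- A Banach bimodule over a (not necessarily unital) complex normed algebra `A`:
a complex Banach space `X` with continuous bilinear left and right actions of `A`
which are associative and commute with each other (`a (x b) = (a x) b`). -/
structure BanachBimodule (A : Type*) [NonUnitalNormedRing A] [NormedSpace ℂ A]
    (X : Type*) [NormedAddCommGroup X] [NormedSpace ℂ X] [CompleteSpace X] where
  lsmul : A →L[ℂ] X →L[ℂ] X
  rsmul : A →L[ℂ] X →L[ℂ] X
  lsmul_mul : ∀ (a b : A) (x : X), lsmul (a * b) x = lsmul a (lsmul b x)
  rsmul_mul : ∀ (a b : A) (x : X), rsmul (a * b) x = rsmul b (rsmul a x)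
  middle : ∀ (a b : A) (x : X), lsmul a (rsmul b x) = rsmul b (lsmul a x)

/-! The limit of `2⁻ⁿ f(2ⁿ·)` at `ab` is also the limit along `n ↦ 2n`, where `4ⁿab = (2ⁿa)(2ⁿb)`.
Since the actions are bilinear, rescaling the approximate identity for `f, g₁, g₂` at
`(2ⁿa, 2ⁿb)` by `4⁻ⁿ` shows that `4⁻ⁿ f(4ⁿab)` and the `n`-th rescalings `2⁻ⁿ g₁(2ⁿb)`,
`2⁻ⁿ f(2ⁿa)`, `2⁻ⁿ g₂(2ⁿa)`, `2⁻ⁿ f(2ⁿb)` satisfy the derivation identity up to an error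
`4⁻ⁿ φ(2ⁿa, 2ⁿb) → 0`. -/

theorem eq_of_tendsto_of_norm_sub_le {α E : Type*} [NormedAddCommGroup E] {l : Filter α}
    [l.NeBot] {u v : α → E} {ε : α → ℝ} {x y : E} (hu : Tendsto u l (𝓝 x))
    (hv : Tendsto v l (𝓝 y)) (hε : Tendsto ε l (𝓝 0)) (huv : ∀ i, ‖u i - v i‖ ≤ ε i) :
    x = y := by
  have hdiff : Tendsto (fun i => u i - v i) l (𝓝 0) := squeeze_zero_norm huv hε
  refine tendsto_nhds_unique hu ?_
  simpa using hdiff.add hv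

namespace BanachBimodule

variable {A : Type*} [NonUnitalNormedRing A] [NormedSpace ℂ A]
  {X : Type*} [NormedAddCommGroup X] [NormedSpace ℂ X] [CompleteSpace X]
  (M : BanachBimodule A X)

theorem tendsto_rsmul_add_lsmul {α : Type*} {l : Filter α} {u v : α → A} {x y : α → X}
    {u₀ v₀ : A} {x₀ y₀ : X} (hu : Tendsto u l (𝓝 u₀)) (hv : Tendsto v l (𝓝 v₀))
    (hx : Tendsto x l (𝓝 x₀)) (hy : Tendsto y l (𝓝 y₀)) :
    Tendsto (fun i => M.rsmul (u i) (x i) + M.lsmul (v i) (y i)) l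
      (𝓝 (M.rsmul u₀ x₀ + M.lsmul v₀ y₀)) :=
  ((M.rsmul.continuous₂.tendsto _).comp (hu.prodMk_nhds hx)).add
    ((M.lsmul.continuous₂.tendsto _).comp (hv.prodMk_nhds hy))

theorem norm_rescaled_defect_le [IsScalarTower ℂ A A] [SMulCommClass ℂ A A]
    {f : A → X} {g₁ g₂ : A → A} {φ : A → A → ℝ}
    (hf_mul : ∀ a b : A,
      ‖f (a * b) - M.rsmul (g₁ b) (f a) - M.lsmul (g₂ a) (f b)‖ ≤ φ a b)
    (c : ℂ) (a b : A) :
    ‖(c ^ 2)⁻¹ • f (c ^ 2 • (a * b)) -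
        (M.rsmul (c⁻¹ • g₁ (c • b)) (c⁻¹ • f (c • a)) +
          M.lsmul (c⁻¹ • g₂ (c • a)) (c⁻¹ • f (c • b)))‖ ≤
      (‖c‖ ^ 2)⁻¹ * φ (c • a) (c • b) := by
  have hmul : c ^ 2 • (a * b) = (c • a) * (c • b) := by rw [smul_mul_smul_comm, sq]
  have hrescale : (c ^ 2)⁻¹ • f (c ^ 2 • (a * b)) -
      (M.rsmul (c⁻¹ • g₁ (c • b)) (c⁻¹ • f (c • a)) +
        M.lsmul (c⁻¹ • g₂ (c • a)) (c⁻¹ • f (c • b))) =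
      (c ^ 2)⁻¹ • (f ((c • a) * (c • b)) - M.rsmul (g₁ (c • b)) (f (c • a)) -
        M.lsmul (g₂ (c • a)) (f (c • b))) := by
    simp only [hmul, map_smul, smul_apply, smul_smul, smul_sub,
      sub_sub, smul_add, ← sq, inv_pow]
  rw [hrescale, norm_smul, norm_inv, norm_pow]
  exact mul_le_mul_of_nonneg_left (hf_mul _ _) (by positivity)

end BanachBimodule

/-- The limit maps `d`, `σ`, `τ` of the approximate data `f`, `g₁`, `g₂` satisfy the
`(σ-τ)`-derivation identity `d(ab) = d(a)σ(b) + τ(a)d(b)`, provided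
`2^{-2n} φ(2ⁿa, 2ⁿb) → 0` and `‖f(ab) − f(a)g₁(b) − g₂(a)f(b)‖ ≤ φ(a,b)`. -/
theorem limit_map_is_sigma_tau_derivation
    {A : Type*} [NonUnitalNormedRing A] [NormedSpace ℂ A]
    [IsScalarTower ℂ A A] [SMulCommClass ℂ A A]
    {X : Type*} [NormedAddCommGroup X] [NormedSpace ℂ X] [CompleteSpace X]
    (M : BanachBimodule A X)
    (f : A → X) (g₁ g₂ : A → A)
    (φ : A → A → ℝ)
    (hφ_lim : ∀ a b : A,
      Tendsto (fun n : ℕ => ((2 : ℝ) ^ (2 * n))⁻¹ * φ ((2 : ℂ) ^ n • a) ((2 : ℂ) ^ n • b))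
        atTop (𝓝 0))
    (d : A → X) (σ τ : A → A)
    (hd_lim : ∀ a : A, Tendsto (fun n : ℕ => ((2 : ℂ) ^ n)⁻¹ • f ((2 : ℂ) ^ n • a))
      atTop (𝓝 (d a)))
    (hσ_lim : ∀ a : A, Tendsto (fun n : ℕ => ((2 : ℂ) ^ n)⁻¹ • g₁ ((2 : ℂ) ^ n • a))
      atTop (𝓝 (σ a)))
    (hτ_lim : ∀ a : A, Tendsto (fun n : ℕ => ((2 : ℂ) ^ n)⁻¹ • g₂ ((2 : ℂ) ^ n • a))
      atTop (𝓝 (τ a)))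
    (hf_mul : ∀ a b : A,
      ‖f (a * b) - M.rsmul (g₁ b) (f a) - M.lsmul (g₂ a) (f b)‖ ≤ φ a b) :
    ∀ a b : A, d (a * b) = M.rsmul (σ b) (d a) + M.lsmul (τ a) (d b) := by
  intro a b
  have hdouble : Tendsto (fun n : ℕ => 2 * n) atTop atTop :=
    tendsto_id.const_mul_atTop' two_pos
  refine eq_of_tendsto_of_norm_sub_le ((hd_lim (a * b)).comp hdouble)
    (M.tendsto_rsmul_add_lsmul (hσ_lim b) (hτ_lim a) (hd_lim a) (hd_lim b)) (hφ_lim a b)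
    fun n => ?_
  have hbound := M.norm_rescaled_defect_le hf_mul ((2 : ℂ) ^ n) a b
  rw [← pow_mul, mul_comm n, norm_pow, ← pow_mul, mul_comm n, Complex.norm_two] at hbound
  exact hbound
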